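/- Let α > 0, 0 < β < α, s > 0, and let V : ℝ² → ℝ be measurable with V ≥ 0 and [V]_α := sup_{t>0} t^{1+α/2} ∫_{{x : |x|² V(x) > t}} |x|^{−2} dx < ∞. Then ∫_{ℝ²} (|x|² V(x) − s)_+^{1+β/2} |x|^{−2} dx ≤ (Γ(2+β/2) Γ((α−β)/2) / Γ(1+α/2)) · s^{(β−α)/2} · [V]_α. (Layer-cake estimate used in the interpolation proof of the weak-type CLR bound.) -/

import Mathlib

/-!
With `μ = |x|⁻² dx` and `f = (|x|² V - s)₊`, the left side is `∫ f ^ p dμ` for `p = 1 + β/2`.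
For `t > 0` the level set `{f > t}` is `{|x|² V₊ > s + t}`, so the definition of `[V]_α` gives
`μ {f > t} ≤ [V]_α (s + t)^{-(1 + α/2)}`. The layer-cake formula
`∫ f ^ p dμ = p ∫₀^∞ t^{p-1} μ {f > t} dt` then leaves `∫₀^∞ t^{p-1} (s + t)^{-(p+q)} dt`
with `q = (α - β)/2`, which the substitution `t = s u / (1 - u)` turns into `s^{-q} B(p, q)`;
and `p B(p, q) = Γ(p + 1) Γ(q) / Γ(p + q)`.
-/

open MeasureTheory
open scoped ENNReal

/-- The square of the Euclidean norm on `ℝ²`. -/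
noncomputable def sqnorm (x : ℝ × ℝ) : ℝ := x.1 ^ 2 + x.2 ^ 2

/-- The weak weighted norm `[V]_α = sup_{t>0} t^{1+α/2} ∫_{{|x|² V(x)₊ > t}} |x|⁻² dx`. -/
noncomputable def weakNorm (α : ℝ) (V : ℝ × ℝ → ℝ) : ℝ≥0∞ :=
  ⨆ (t : ℝ) (_ : 0 < t), ENNReal.ofReal (t ^ (1 + α / 2)) *
    ∫⁻ x in {x : ℝ × ℝ | t < sqnorm x * max (V x) 0}, ENNReal.ofReal (sqnorm x)⁻¹

open Set ProbabilityTheory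

lemma lintegral_Ioo_rpow_mul_one_sub_rpow {p q : ℝ} (hp : 0 < p) (hq : 0 < q) :
    ∫⁻ u in Ioo (0 : ℝ) 1, ENNReal.ofReal (u ^ (p - 1) * (1 - u) ^ (q - 1)) =
      ENNReal.ofReal (beta p q) := by
  have h := lintegral_betaPDF_eq_one hp hq
  simp_rw [lintegral_betaPDF, mul_assoc,
    ENNReal.ofReal_mul (one_div_pos.2 (beta_pos hp hq)).le] at h
  rw [lintegral_const_mul' _ _ ENNReal.ofReal_ne_top, mul_comm] at h
  rw [ENNReal.eq_inv_of_mul_eq_one_left h, one_div,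
    ENNReal.ofReal_inv_of_pos (beta_pos hp hq), inv_inv]

lemma image_mul_div_one_sub_Ioo {s : ℝ} (hs : 0 < s) :
    (fun u : ℝ => s * u / (1 - u)) '' Ioo 0 1 = Ioi 0 := by
  ext t
  simp only [mem_image, mem_Ioo, mem_Ioi]
  constructor
  · rintro ⟨u, ⟨hu0, hu1⟩, rfl⟩
    exact div_pos (mul_pos hs hu0) (sub_pos.2 hu1)
  · intro ht
    refine ⟨t / (s + t), ⟨by positivity, (div_lt_one (by positivity)).2 (by linarith)⟩, ?_⟩
    have : s ≠ 0 := hs.ne'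
    have hst : s + t ≠ 0 := by positivity
    rw [one_sub_div hst, add_sub_cancel_right]
    field_simp

lemma div_sq_mul_rpow_mul_div_one_sub {p q s u : ℝ} (hs : 0 < s) (hu0 : 0 < u) (hu1 : u < 1) :
    s / (1 - u) ^ 2 * ((s * u / (1 - u)) ^ (p - 1) * (s + s * u / (1 - u)) ^ (-(p + q))) =
      s ^ (-q) * (u ^ (p - 1) * (1 - u) ^ (q - 1)) := by
  have hv : 0 < 1 - u := sub_pos.2 hu1
  have hsum : s + s * u / (1 - u) = s / (1 - u) := by field_simp; ring
  rw [hsum, Real.div_rpow (by positivity) hv.le, Real.div_rpow hs.le hv.le,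
    Real.mul_rpow hs.le hu0.le]
  have hs_pow : s ^ (-q) = s * s ^ (p - 1) * s ^ (-(p + q)) := by
    rw [mul_comm s, ← Real.rpow_add_one hs.ne', ← Real.rpow_add hs]
    ring_nf
  have hv_pow : (1 - u) ^ (q - 1) = ((1 - u) ^ 2 * (1 - u) ^ (p - 1) * (1 - u) ^ (-(p + q)))⁻¹ := by
    rw [← Real.rpow_two, ← Real.rpow_add hv, ← Real.rpow_add hv, ← Real.rpow_neg hv.le]
    ring_nf
  rw [hs_pow, hv_pow]
  generalize 1 - u = v
  ring

lemma lintegral_Ioi_rpow_mul_add_rpow_neg {p q s : ℝ} (hp : 0 < p) (hq : 0 < q) (hs : 0 < s) :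
    ∫⁻ t in Ioi (0 : ℝ), ENNReal.ofReal (t ^ (p - 1) * (s + t) ^ (-(p + q))) =
      ENNReal.ofReal (s ^ (-q) * beta p q) := by
  have hderiv : ∀ u ∈ Ioo (0 : ℝ) 1,
      HasDerivWithinAt (fun u => s * u / (1 - u)) (s / (1 - u) ^ 2) (Ioo 0 1) u := by
    intro u hu
    have h1u : 1 - u ≠ 0 := (sub_pos.2 hu.2).ne'
    refine ((((hasDerivAt_id' u).const_mul s).div ((hasDerivAt_id' u).const_sub 1) h1u)
      |>.congr_deriv ?_).hasDerivWithinAt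
    ring
  have hinj : InjOn (fun u => s * u / (1 - u)) (Ioo 0 1) := by
    intro a ha b hb h
    rw [div_eq_div_iff (sub_pos.2 ha.2).ne' (sub_pos.2 hb.2).ne'] at h
    nlinarith
  rw [← image_mul_div_one_sub_Ioo hs,
    lintegral_image_eq_lintegral_abs_deriv_mul measurableSet_Ioo hderiv hinj,
    ENNReal.ofReal_mul (by positivity), ← lintegral_Ioo_rpow_mul_one_sub_rpow hp hq,
    ← lintegral_const_mul' _ _ ENNReal.ofReal_ne_top]
  refine setLIntegral_congr_fun measurableSet_Ioo fun u ⟨hu0, hu1⟩ => ?_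
  have hv : 0 < 1 - u := sub_pos.2 hu1
  rw [← ENNReal.ofReal_mul (abs_nonneg _), ← ENNReal.ofReal_mul (by positivity),
    abs_of_pos (by positivity), div_sq_mul_rpow_mul_div_one_sub hs hu0 hu1]

lemma lintegral_rpow_le_of_meas_lt_le {Ω : Type*} [MeasurableSpace Ω] (μ : Measure Ω)
    {f : Ω → ℝ} (hf0 : 0 ≤ᵐ[μ] f) (hf : AEMeasurable f μ) {p q s : ℝ} (hp : 0 < p) (hq : 0 < q)
    (hs : 0 < s) {C : ℝ≥0∞}
    (hC : ∀ t > 0, μ {ω | t < f ω} ≤ C * ENNReal.ofReal ((s + t) ^ (-(p + q)))) :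
    ∫⁻ ω, ENNReal.ofReal (f ω ^ p) ∂μ ≤ ENNReal.ofReal (p * beta p q * s ^ (-q)) * C := by
  calc ∫⁻ ω, ENNReal.ofReal (f ω ^ p) ∂μ
      = ENNReal.ofReal p * ∫⁻ t in Ioi 0, μ {ω | t < f ω} * ENNReal.ofReal (t ^ (p - 1)) :=
        lintegral_rpow_eq_lintegral_meas_lt_mul μ hf0 hf hp
    _ ≤ ENNReal.ofReal p *
          ∫⁻ t in Ioi 0, C * ENNReal.ofReal (t ^ (p - 1) * (s + t) ^ (-(p + q))) := by
        gcongr ENNReal.ofReal p * ?_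
        refine setLIntegral_mono' measurableSet_Ioi fun t (ht : 0 < t) => ?_
        calc μ {ω | t < f ω} * ENNReal.ofReal (t ^ (p - 1))
            ≤ C * ENNReal.ofReal ((s + t) ^ (-(p + q))) * ENNReal.ofReal (t ^ (p - 1)) := by
              gcongr; exact hC t ht
          _ = C * ENNReal.ofReal (t ^ (p - 1) * (s + t) ^ (-(p + q))) := by
              rw [mul_assoc, ← ENNReal.ofReal_mul (Real.rpow_nonneg (by linarith) _),
                mul_comm ((s + t) ^ _)]
    _ = ENNReal.ofReal (p * beta p q * s ^ (-q)) * C := by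
        rw [lintegral_const_mul _ (by fun_prop), lintegral_Ioi_rpow_mul_add_rpow_neg hp hq hs,
          ← mul_assoc, mul_comm _ C, mul_assoc, ← ENNReal.ofReal_mul hp.le, mul_comm C]
        ring_nf

@[fun_prop]
lemma measurable_sqnorm : Measurable sqnorm := by
  unfold sqnorm; fun_prop

lemma sqnorm_nonneg (x : ℝ × ℝ) : 0 ≤ sqnorm x := by
  unfold sqnorm; positivity

noncomputable def weightedVolume : Measure (ℝ × ℝ) :=
  volume.withDensity fun x => ENNReal.ofReal (sqnorm x)⁻¹

lemma lintegral_weightedVolume {g : ℝ × ℝ → ℝ} (hg : ∀ x, 0 ≤ g x) :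
    ∫⁻ x, ENNReal.ofReal (g x) ∂weightedVolume = ∫⁻ x, ENNReal.ofReal (g x / sqnorm x) := by
  rw [weightedVolume, lintegral_withDensity_eq_lintegral_mul_non_measurable _
    (by fun_prop) (ae_of_all _ fun _ => ENNReal.ofReal_lt_top)]
  refine lintegral_congr fun x => ?_
  rw [Pi.mul_apply, div_eq_mul_inv, ENNReal.ofReal_mul (hg x), mul_comm]

lemma lt_sqnorm_mul_iff_lt_sqnorm_mul_max {r : ℝ} (hr : 0 < r) (x : ℝ × ℝ) (v : ℝ) :
    r < sqnorm x * v ↔ r < sqnorm x * max v 0 := by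
  rcases le_total 0 v with hv | hv
  · rw [max_eq_left hv]
  · rw [max_eq_right hv, mul_zero]
    have := mul_nonpos_of_nonneg_of_nonpos (sqnorm_nonneg x) hv
    constructor <;> intro h <;> linarith

lemma weightedVolume_lt_sqnorm_mul_le_weakNorm (α : ℝ) (V : ℝ × ℝ → ℝ) {r : ℝ} (hr : 0 < r) :
    weightedVolume {x | r < sqnorm x * V x} ≤
      weakNorm α V * ENNReal.ofReal (r ^ (-(1 + α / 2))) := by
  have hrα : 0 < r ^ (1 + α / 2) := Real.rpow_pos_of_pos hr _
  have hlevel : {x | r < sqnorm x * V x} = {x | r < sqnorm x * max (V x) 0} :=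
    Set.ext fun x => lt_sqnorm_mul_iff_lt_sqnorm_mul_max hr x (V x)
  rw [hlevel, weightedVolume, withDensity_apply', Real.rpow_neg hr.le, ENNReal.ofReal_inv_of_pos hrα,
    ← div_eq_mul_inv, ENNReal.le_div_iff_mul_le (Or.inl (ENNReal.ofReal_pos.2 hrα).ne')
      (Or.inl ENNReal.ofReal_ne_top), mul_comm]
  exact le_iSup₂ (f := fun (t : ℝ) (_ : 0 < t) => ENNReal.ofReal (t ^ (1 + α / 2)) *
    ∫⁻ x in {x | t < sqnorm x * max (V x) 0}, ENNReal.ofReal (sqnorm x)⁻¹) r hr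

theorem layer_cake_estimate_general (α β s : ℝ) (hβ : 0 < β) (hβα : β < α)
    (hs : 0 < s) (V : ℝ × ℝ → ℝ) (hV : Measurable V) :
    ∫⁻ x : ℝ × ℝ,
        ENNReal.ofReal ((max (sqnorm x * V x - s) 0) ^ (1 + β / 2) / sqnorm x) ≤
      ENNReal.ofReal
          (Real.Gamma (2 + β / 2) * Real.Gamma ((α - β) / 2) / Real.Gamma (1 + α / 2) *
            s ^ ((β - α) / 2)) *
        weakNorm α V := by
  have hp : 0 < 1 + β / 2 := by linarith
  have hq : 0 < (α - β) / 2 := by linarith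
  have hpq : (1 + β / 2) + (α - β) / 2 = 1 + α / 2 := by ring
  have hconst : Real.Gamma (2 + β / 2) * Real.Gamma ((α - β) / 2) / Real.Gamma (1 + α / 2) *
      s ^ ((β - α) / 2) = (1 + β / 2) * beta (1 + β / 2) ((α - β) / 2) * s ^ (-((α - β) / 2)) := by
    rw [beta, show 2 + β / 2 = (1 + β / 2) + 1 by ring, Real.Gamma_add_one hp.ne', hpq,
      show -((α - β) / 2) = (β - α) / 2 by ring]
    ring
  rw [← lintegral_weightedVolume fun x => by positivity, hconst]
  refine lintegral_rpow_le_of_meas_lt_le weightedVolume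
    (ae_of_all _ fun x => le_max_right (sqnorm x * V x - s) 0) (by fun_prop) hp hq hs
    fun t ht => ?_
  have hlevel : {x | t < max (sqnorm x * V x - s) 0} = {x | s + t < sqnorm x * V x} := by
    ext x
    simp only [mem_ofPred_eq, lt_max_iff, ht.not_gt, or_false]
    constructor <;> intro h <;> linarith
  rw [hlevel, hpq]
  exact weightedVolume_lt_sqnorm_mul_le_weakNorm α V (by linarith)

theorem layer_cake_estimate (α β s : ℝ) (hα : 0 < α) (hβ : 0 < β) (hβα : β < α)
    (hs : 0 < s) (V : ℝ × ℝ → ℝ) (hV : Measurable V) (hV0 : ∀ x, 0 ≤ V x)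
    (hfin : weakNorm α V < ⊤) :
    ∫⁻ x : ℝ × ℝ,
        ENNReal.ofReal ((max (sqnorm x * V x - s) 0) ^ (1 + β / 2) / sqnorm x) ≤
      ENNReal.ofReal
          (Real.Gamma (2 + β / 2) * Real.Gamma ((α - β) / 2) / Real.Gamma (1 + α / 2) *
            s ^ ((β - α) / 2)) *
        weakNorm α V :=
  layer_cake_estimate_general α β s hβ hβα hs V hV
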